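/- Let n, k ≤ n, D be positive integers. For any mask M over ground set [n], LDUB(n, M) ≤ 1 + Σ_{d=1}^{D} (1/d!)·( 2d / ln( 2d·n²/(|V(M)|·k²) + 1 ) )^{2d}, where ln denotes the natural logarithm. -/

import Mathlib

open Finset Filter Asymptotics Real MeasureTheory
open scoped Classical BigOperators

noncomputable section

namespace PlantedCliqueLD

/-- The vertex set `V(M)` of a mask `M` over ground set `[n]`. -/
def maskVerts {n : ℕ} (M : Finset (Sym2 (Fin n))) : Finset (Fin n) :=
  Finset.univ.filter fun v => ∃ e ∈ M, v ∈ e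

/-- The mask degree `deg^M(v)` of a vertex `v`. -/
def maskDeg {n : ℕ} (M : Finset (Sym2 (Fin n))) (v : Fin n) : ℕ :=
  (M.filter fun e => v ∈ e).card

/-- Expectation of `f` under `Clique(n,k)`, the uniform distribution on
subsets of `[n]` of size `k` (identifying a 0/1 vector with its support). -/
def cliqueExp (n k : ℕ) (f : Finset (Fin n) → ℝ) : ℝ :=
  (∑ S ∈ Finset.powersetCard k (Finset.univ : Finset (Fin n)), f S) /
    ((Finset.powersetCard k (Finset.univ : Finset (Fin n))).card : ℝ)

/-- Expectation of `f` under `Clique(n,k,S)`: uniform over size-`k` subsets of `S`. -/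
def cliqueExpCond (n k : ℕ) (S : Finset (Fin n)) (f : Finset (Fin n) → ℝ) : ℝ :=
  (∑ T ∈ Finset.powersetCard k S, f T) / ((Finset.powersetCard k S).card : ℝ)

/-- Both endpoints of the unordered pair `e` lie in `T`. -/
def edgeIn {n : ℕ} (T : Finset (Fin n)) (e : Sym2 (Fin n)) : Prop :=
  ∀ v ∈ e, v ∈ T

/-- `Φ(M) = ∑_{(i,j) ∈ M} Z_i Z_j` where `Z_i` is the indicator of `i ∈ T`. -/
def Phi {n : ℕ} (M : Finset (Sym2 (Fin n))) (T : Finset (Fin n)) : ℝ :=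
  ∑ e ∈ M, if edgeIn T e then (1 : ℝ) else 0

/-- The low-degree likelihood ratio upper bound `LDUB(n,M)` at degree `D`
and clique size `k`:  `1 + ∑_{d=1}^D (1/d!) E[(∑_{(i,j)∈M} Z_i Z_j)^d]`,
where `Z_i = X_i X'_i` for independent `X, X' ~ Clique(n,k)`. -/
def LDUB (n k D : ℕ) (M : Finset (Sym2 (Fin n))) : ℝ :=
  1 + ∑ d ∈ Finset.Icc 1 D, (1 / (Nat.factorial d : ℝ)) *
    cliqueExp n k fun S => cliqueExp n k fun S' => Phi M (S ∩ S') ^ d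

/-- The conditional low-degree likelihood ratio upper bound `Cond(n,M,S)`,
defined as `LDUB` but with `X, X' ~ Clique(n,k,S)`. -/
def CondLDUB (n k D : ℕ) (M : Finset (Sym2 (Fin n))) (S : Finset (Fin n)) : ℝ :=
  1 + ∑ d ∈ Finset.Icc 1 D, (1 / (Nat.factorial d : ℝ)) *
    cliqueExpCond n k S fun X => cliqueExpCond n k S fun X' => Phi M (X ∩ X') ^ d

/-- The set of vertices that donate an edge in `Donate(M, v → u)`:
those `s ∉ {v,u}` with `(s,v) ∈ M` and `(s,u) ∉ M`. -/
def donorSet {n : ℕ} (M : Finset (Sym2 (Fin n))) (v u : Fin n) : Finset (Fin n) :=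
  Finset.univ.filter fun s => s ≠ v ∧ s ≠ u ∧ s(s, v) ∈ M ∧ s(s, u) ∉ M

/-- `Donate(M, v → u)`: for every `s ∈ V(M) \ {v,u}` with `(s,v) ∈ M` and
`(s,u) ∉ M`, remove `(s,v)` and add `(s,u)`. -/
def donate {n : ℕ} (M : Finset (Sym2 (Fin n))) (v u : Fin n) : Finset (Sym2 (Fin n)) :=
  (M \ (donorSet M v u).image fun s => s(s, v)) ∪ (donorSet M v u).image fun s => s(s, u)

/-- The `±1` value encoded by a Boolean. -/
def signVal (b : Bool) : ℝ := if b then 1 else -1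

/-- Expectation of `h` under the (masked) Erdős–Rényi null distribution:
all coordinates independent uniform `±1`.  (Since `h` is only ever applied
through coordinates of the mask, this realizes the marginal `G(n,M)`.) -/
def nullExp (n : ℕ) (h : (Sym2 (Fin n) → ℝ) → ℝ) : ℝ :=
  (∑ A : Sym2 (Fin n) → Bool, h fun e => signVal (A e)) /
    (Fintype.card (Sym2 (Fin n) → Bool) : ℝ)

/-- The planted sample: edges inside the clique `S` are `+1`; all other
coordinates take the independent uniform `±1` values given by `A`. -/
def plantedSample {n : ℕ} (S : Finset (Fin n)) (A : Sym2 (Fin n) → Bool) :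
    Sym2 (Fin n) → ℝ := fun e => if edgeIn S e then 1 else signVal (A e)

/-- Joint expectation of `h(K, Y)` where `K ~ Clique(n,k)` is the planted
clique and `Y` is the planted-clique sample (this realizes `G(n,k,M)` for
functions reading only mask coordinates, jointly with the clique). -/
def plantedJointExp (n k : ℕ) (h : Finset (Fin n) → (Sym2 (Fin n) → ℝ) → ℝ) : ℝ :=
  cliqueExp n k fun S =>
    (∑ A : Sym2 (Fin n) → Bool, h S (plantedSample S A)) /
      (Fintype.card (Sym2 (Fin n) → Bool) : ℝ)

/-- Expectation of `h(Y)` under the planted clique distribution. -/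
def plantedExp (n k : ℕ) (h : (Sym2 (Fin n) → ℝ) → ℝ) : ℝ :=
  plantedJointExp n k fun _ Y => h Y

/-- Variance under the null distribution. -/
def nullVar (n : ℕ) (h : (Sym2 (Fin n) → ℝ) → ℝ) : ℝ :=
  nullExp n fun Y => (h Y - nullExp n h) ^ 2

/-- Variance under the planted distribution. -/
def plantedVar (n k : ℕ) (h : (Sym2 (Fin n) → ℝ) → ℝ) : ℝ :=
  plantedExp n k fun Y => (h Y - plantedExp n k h) ^ 2

/-- Evaluate a polynomial whose variables are the entries of the mask `M`
on a (full) sample `Y`, reading only the coordinates in `M`. -/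
def evalMasked {n : ℕ} (M : Finset (Sym2 (Fin n)))
    (f : MvPolynomial {e : Sym2 (Fin n) // e ∈ M} ℝ) (Y : Sym2 (Fin n) → ℝ) : ℝ :=
  MvPolynomial.eval (fun e => Y e.1) f

/-!
Every pair of `M` counted by `Phi M (S ∩ S')` lies inside `W = S ∩ S' ∩ V(M)`, so
`Φ^d ≤ |W|^{2d}`, and `x^{2d} ≤ (2d / (e ℓ))^{2d} e^{ℓ x}` turns the `d`-th moment into an
exponential moment, with `ℓ = ln (q + 1)` and `q = 2d n² / (|V(M)| k²)`. Expanding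
`(1 + q)^{|W|} = ∑_{A ⊆ W} q^{|A|}` and using `P(A ⊆ S) ≤ (k/n)^{|A|}` for a uniform
`k`-subset `S` gives `E (1 + q)^{|W|} ≤ (1 + 2d/|V(M)|)^{|V(M)|} ≤ e^{2d}`, exactly the factor
by which `(2d / (e ℓ))^{2d}` falls short of `(2d / ℓ)^{2d}`.
-/

end PlantedCliqueLD

lemma Real.pow_le_div_mul_exp (r : ℕ) {l x : ℝ} (hl : 0 < l) (hx : 0 ≤ x) :
    x ^ r ≤ (r / (exp 1 * l)) ^ r * exp (l * x) := by
  rcases Nat.eq_zero_or_pos r with rfl | hr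
  · simpa using one_le_exp (mul_nonneg hl.le hx)
  have hr' : (0 : ℝ) < r := Nat.cast_pos.2 hr
  set y := l * x / r with hy_def
  have hy : y ≤ exp (y - 1) := by linarith [add_one_le_exp (y - 1)]
  calc x ^ r = (r / l) ^ r * y ^ r := by rw [← mul_pow, hy_def]; field_simp
    _ ≤ (r / l) ^ r * exp (y - 1) ^ r := by gcongr
    _ = (r / (exp 1 * l)) ^ r * exp (l * x) := by
      rw [← exp_nat_mul, mul_sub, mul_div_cancel₀ _ hr'.ne', exp_sub, mul_one, ← exp_one_pow,
        div_pow, div_pow, mul_pow]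
      field_simp

lemma Nat.descFactorial_mul_pow_le {k n : ℕ} (hkn : k ≤ n) (a : ℕ) :
    k.descFactorial a * n ^ a ≤ n.descFactorial a * k ^ a := by
  induction a with
  | zero => simp
  | succ a ih =>
    have step : (k - a) * n ≤ (n - a) * k := by
      rw [Nat.sub_mul, Nat.sub_mul, mul_comm n k]
      exact Nat.sub_le_sub_left (Nat.mul_le_mul_left a hkn) _
    calc k.descFactorial (a + 1) * n ^ (a + 1)
        = ((k - a) * n) * (k.descFactorial a * n ^ a) := by rw [Nat.descFactorial_succ]; ring
      _ ≤ ((n - a) * k) * (n.descFactorial a * k ^ a) := Nat.mul_le_mul step ih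
      _ = n.descFactorial (a + 1) * k ^ (a + 1) := by rw [Nat.descFactorial_succ]; ring

lemma Nat.choose_sub_mul_pow_le {a k n : ℕ} (hak : a ≤ k) (hkn : k ≤ n) :
    (n - a).choose (k - a) * n ^ a ≤ n.choose k * k ^ a := by
  have hchoose : k.choose a * n ^ a ≤ n.choose a * k ^ a := by
    refine Nat.le_of_mul_le_mul_left ?_ a.factorial_pos
    simpa only [← mul_assoc, ← Nat.descFactorial_eq_factorial_mul_choose]
      using Nat.descFactorial_mul_pow_le hkn a
  refine Nat.le_of_mul_le_mul_left ?_ (Nat.choose_pos (hak.trans hkn))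
  calc n.choose a * ((n - a).choose (k - a) * n ^ a)
      = n.choose k * (k.choose a * n ^ a) := by rw [← mul_assoc, ← Nat.choose_mul hak]; ring
    _ ≤ n.choose k * (n.choose a * k ^ a) := Nat.mul_le_mul_left _ hchoose
    _ = n.choose a * (n.choose k * k ^ a) := by ring

lemma Finset.card_filter_powersetCard_subset_mul_pow_le {α : Type*} [DecidableEq α]
    {s t : Finset α} (hst : s ⊆ t) {k : ℕ} (hkt : k ≤ #t) :
    #{u ∈ t.powersetCard k | s ⊆ u} * #t ^ #s ≤ (#t).choose k * k ^ #s := by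
  by_cases hsk : #s ≤ k
  · rw [card_filter_powersetCard_subset s t k hst hsk]
    exact Nat.choose_sub_mul_pow_le hsk hkt
  · have hempty : {u ∈ t.powersetCard k | s ⊆ u} = ∅ := filter_false_of_mem fun u hu hsu =>
      hsk ((card_le_card hsu).trans (mem_powersetCard.1 hu).2.le)
    simp [hempty]

lemma Finset.sum_sum_add_one_pow_card_inter {α R : Type*} [DecidableEq α] [CommSemiring R]
    (P : Finset (Finset α)) (V : Finset α) (q : R) :
    ∑ S ∈ P, ∑ S' ∈ P, (q + 1) ^ #(S ∩ S' ∩ V) =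
      ∑ A ∈ V.powerset, q ^ #A * (#{S ∈ P | A ⊆ S} : R) ^ 2 := by
  have hexpand : ∀ S S' : Finset α, (q + 1) ^ #(S ∩ S' ∩ V) =
      ∑ A ∈ V.powerset, if A ⊆ S ∧ A ⊆ S' then q ^ #A else 0 := by
    intro S S'
    have hpow : (S ∩ S' ∩ V).powerset = {A ∈ V.powerset | A ⊆ S ∧ A ⊆ S'} := by
      ext A; simp only [mem_powerset, mem_filter, subset_inter_iff]; tauto
    rw [← sum_filter, ← hpow, ← sum_pow_mul_eq_add_pow]
    simp only [one_pow, mul_one]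
  simp_rw [hexpand]
  rw [sum_congr rfl fun S _ => sum_comm, sum_comm]
  refine sum_congr rfl fun A _ => ?_
  simp only [ite_and, sum_ite_irrel, sum_const_zero, ← sum_filter, sum_const, nsmul_eq_mul]
  ring

namespace PlantedCliqueLD

lemma Phi_nonneg {n : ℕ} (M : Finset (Sym2 (Fin n))) (U : Finset (Fin n)) : 0 ≤ Phi M U :=
  sum_nonneg fun _ _ => by positivity

lemma Phi_le_card_inter_maskVerts_sq {n : ℕ} (M : Finset (Sym2 (Fin n))) (U : Finset (Fin n)) :
    Phi M U ≤ (#(U ∩ maskVerts M) : ℝ) ^ 2 := by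
  have hsub : {e ∈ M | edgeIn U e} ⊆ (U ∩ maskVerts M).sym2 := fun e he => by
    rw [mem_filter] at he
    exact mem_sym2_iff.2 fun v hv =>
      mem_inter.2 ⟨he.2 v hv, mem_filter.2 ⟨mem_univ v, e, he.1, hv⟩⟩
  have hcard : #{e ∈ M | edgeIn U e} ≤ #(U ∩ maskVerts M) ^ 2 :=
    calc _ ≤ #(U ∩ maskVerts M).sym2 := card_le_card hsub
      _ ≤ #((U ∩ maskVerts M) ×ˢ (U ∩ maskVerts M)) := by
          rw [sym2_eq_image]; exact card_image_le
      _ = _ := by rw [card_product, sq]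
  rw [Phi, sum_boole]
  exact_mod_cast hcard

lemma cliqueExp_mono {n k : ℕ} {f g : Finset (Fin n) → ℝ} (hfg : ∀ S, f S ≤ g S) :
    cliqueExp n k f ≤ cliqueExp n k g :=
  div_le_div_of_nonneg_right (sum_le_sum fun S _ => hfg S) (Nat.cast_nonneg _)

lemma cliqueExp_const_mul {n k : ℕ} (c : ℝ) (f : Finset (Fin n) → ℝ) :
    cliqueExp n k (fun S => c * f S) = c * cliqueExp n k f := by
  rw [cliqueExp, cliqueExp, ← mul_sum, mul_div_assoc]

lemma cliqueExp_add_one_pow_card_inter_le {n k : ℕ} (hn : 0 < n) (hkn : k ≤ n)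
    (V : Finset (Fin n)) {q : ℝ} (hq : 0 ≤ q) :
    cliqueExp n k (fun S => cliqueExp n k fun S' => (q + 1) ^ #(S ∩ S' ∩ V)) ≤
      (q * (k / n) ^ 2 + 1) ^ #V := by
  set P := powersetCard k (univ : Finset (Fin n))
  have hP : (#P : ℝ) = n.choose k := by simp [P]
  have hN : (0 : ℝ) < n.choose k := Nat.cast_pos.2 (Nat.choose_pos hkn)
  have hcount : ∀ A : Finset (Fin n),
      (#{S ∈ P | A ⊆ S} : ℝ) ≤ n.choose k * (k / n) ^ #A := by
    intro A
    have h := card_filter_powersetCard_subset_mul_pow_le (subset_univ A) (k := k)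
      (by simpa using hkn)
    rw [card_univ, Fintype.card_fin] at h
    rw [div_pow, ← mul_div_assoc, le_div_iff₀ (by positivity)]
    exact_mod_cast h
  calc cliqueExp n k (fun S => cliqueExp n k fun S' => (q + 1) ^ #(S ∩ S' ∩ V))
      = (∑ A ∈ V.powerset, q ^ #A * (#{S ∈ P | A ⊆ S} : ℝ) ^ 2) / (n.choose k) ^ 2 := by
        rw [← sum_sum_add_one_pow_card_inter, ← hP, sq, ← div_div, sum_div]
        simp only [cliqueExp, P]
    _ ≤ (∑ A ∈ V.powerset, q ^ #A * (n.choose k * (k / n) ^ #A) ^ 2) / (n.choose k) ^ 2 := by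
        gcongr with A; exact hcount A
    _ = (q * (k / n) ^ 2 + 1) ^ #V := by
        rw [← sum_pow_mul_eq_add_pow, sum_div]
        refine sum_congr rfl fun A _ => ?_
        field_simp
        ring

lemma Phi_pow_le_mul_exp_pow {n : ℕ} (M : Finset (Sym2 (Fin n))) (U : Finset (Fin n)) (d : ℕ)
    {l : ℝ} (hl : 0 < l) :
    Phi M U ^ d ≤
      (((2 * d : ℕ) : ℝ) / (exp 1 * l)) ^ (2 * d) * exp l ^ #(U ∩ maskVerts M) :=
  calc Phi M U ^ d ≤ ((#(U ∩ maskVerts M) : ℝ) ^ 2) ^ d :=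
        pow_le_pow_left₀ (Phi_nonneg M U) (Phi_le_card_inter_maskVerts_sq M U) d
    _ ≤ _ := by
        rw [← pow_mul, ← exp_nat_mul, mul_comm (#(U ∩ maskVerts M) : ℝ)]
        exact pow_le_div_mul_exp _ hl (Nat.cast_nonneg _)

lemma cliqueExp_Phi_pow_le {n k d : ℕ} (hk : 0 < k) (hkn : k ≤ n) (hd : 0 < d)
    (M : Finset (Sym2 (Fin n))) :
    cliqueExp n k (fun S => cliqueExp n k fun S' => Phi M (S ∩ S') ^ d) ≤
      (2 * d / log (2 * d * n ^ 2 / (#(maskVerts M) * k ^ 2) + 1)) ^ (2 * d) := by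
  rcases (maskVerts M).eq_empty_or_nonempty with hV | hV
  · have hPhi : ∀ U, Phi M U = 0 := fun U =>
      le_antisymm (by simpa [hV] using Phi_le_card_inter_maskVerts_sq M U) (Phi_nonneg M U)
    simp [hPhi, hV, hd.ne', cliqueExp]
  set m := #(maskVerts M)
  set q : ℝ := 2 * d * n ^ 2 / (m * k ^ 2) with hq_def
  have hm : (0 : ℝ) < m := Nat.cast_pos.2 hV.card_pos
  have hn : (0 : ℝ) < n := Nat.cast_pos.2 (hk.trans_le hkn)
  have hq : 0 < q := by positivity
  set l := log (q + 1)
  have hl : 0 < l := log_pos (by linarith)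
  have hexp_l : exp l = q + 1 := exp_log (by linarith)
  set C := (((2 * d : ℕ) : ℝ) / (exp 1 * l)) ^ (2 * d) with hC
  have hmoment : (q * (k / n) ^ 2 + 1) ^ m ≤ exp (2 * d) := by
    have hqk : q * (k / n) ^ 2 + 1 = 1 - -(2 * d) / m := by rw [hq_def]; field_simp; ring
    have h := one_sub_div_pow_le_exp_neg (n := m) (t := -(2 * d))
      (by linarith [(d.cast_nonneg : (0 : ℝ) ≤ d)])
    rwa [neg_neg, ← hqk] at h
  calc cliqueExp n k (fun S => cliqueExp n k fun S' => Phi M (S ∩ S') ^ d)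
      ≤ cliqueExp n k (fun S => cliqueExp n k fun S' =>
          C * (q + 1) ^ #(S ∩ S' ∩ maskVerts M)) :=
        cliqueExp_mono fun S => cliqueExp_mono fun S' => by
          rw [← hexp_l]; exact Phi_pow_le_mul_exp_pow M _ d hl
    _ = C * cliqueExp n k (fun S => cliqueExp n k fun S' =>
          (q + 1) ^ #(S ∩ S' ∩ maskVerts M)) := by
        simp only [cliqueExp_const_mul]
    _ ≤ C * exp (2 * d) := by
        gcongr
        exact (cliqueExp_add_one_pow_card_inter_le (hk.trans_le hkn) hkn _ hq.le).trans hmoment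
    _ = (2 * d / l) ^ (2 * d) := by
        rw [hC, show (2 * d : ℝ) = (2 * d : ℕ) by push_cast; ring, ← exp_one_pow, ← mul_pow]
        field_simp

theorem ldub_few_vertices_general {n : ℕ} (k D : ℕ) (hk : 0 < k) (hkn : k ≤ n)
    (M : Finset (Sym2 (Fin n))) :
    LDUB n k D M ≤ 1 + ∑ d ∈ Finset.Icc 1 D, (1 / (Nat.factorial d : ℝ)) *
      ((2 * (d : ℝ)) /
        Real.log (2 * (d : ℝ) * (n : ℝ) ^ 2 /
          (((maskVerts M).card : ℝ) * (k : ℝ) ^ 2) + 1)) ^ (2 * d) := by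
  rw [LDUB]
  gcongr with d hd
  exact cliqueExp_Phi_pow_le hk hkn (mem_Icc.1 hd).1 M

/-- For any mask `M`,
`LDUB(n,M) ≤ 1 + ∑_{d=1}^D (1/d!) (2d / ln(2d n² / (|V(M)| k²) + 1))^{2d}`. -/
theorem ldub_few_vertices {n : ℕ} (k D : ℕ) (hn : 0 < n) (hk : 0 < k) (hkn : k ≤ n)
    (hD : 0 < D) (M : Finset (Sym2 (Fin n))) (hMnd : ∀ e ∈ M, ¬ e.IsDiag) :
    LDUB n k D M ≤ 1 + ∑ d ∈ Finset.Icc 1 D, (1 / (Nat.factorial d : ℝ)) *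
      ((2 * (d : ℝ)) /
        Real.log (2 * (d : ℝ) * (n : ℝ) ^ 2 /
          (((maskVerts M).card : ℝ) * (k : ℝ) ^ 2) + 1)) ^ (2 * d) :=
  ldub_few_vertices_general k D hk hkn M

end PlantedCliqueLD
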